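/- arXiv:1702.03255 — 2 statements merged into one kernel-verified Lean document; each statement's English description precedes it below -/
import Mathlib

section
/- The centered n-permutohedron is the (closed) Voronoi cell of the lattice Λ at the origin: 𝔓 = {y ∈ H₀ : ‖y‖ ≤ ‖y − μ‖ for all μ ∈ Λ}. -/
open Finset Pointwise

noncomputable section

/-- The ambient Euclidean space `ℝ^{n+1}`. -/
abbrev Amb (n : ℕ) := EuclideanSpace ℝ (Fin (n + 1))

/-- The hyperplane `H₀ = {x ∈ ℝ^{n+1} : x_1 + ⋯ + x_{n+1} = 0}`. -/
def H0 (n : ℕ) : Submodule ℝ (Amb n) where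
  carrier := {x | ∑ i, x i = 0}
  add_mem' := by
    intro a b ha hb
    simp only [Set.mem_setOf_eq, PiLp.add_apply] at *
    simp [Finset.sum_add_distrib, ha, hb]
  zero_mem' := by
    simp only [Set.mem_setOf_eq, PiLp.zero_apply]
    simp
  smul_mem' := by
    intro c a ha
    simp only [Set.mem_setOf_eq, PiLp.smul_apply, smul_eq_mul] at *
    rw [← Finset.mul_sum, ha, mul_zero]

/-- `λ_i = e_i − 𝟙/(n+1) ∈ H₀`. -/
def lamb (n : ℕ) (i : Fin (n + 1)) : H0 n :=
  ⟨(WithLp.toLp 2 (fun j => (if j = i then (1 : ℝ) else 0) - 1 / (n + 1)) : Amb n), by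
    have h1 : (n : ℝ) + 1 ≠ 0 := by positivity
    show ∑ j, ((if j = i then (1 : ℝ) else 0) - 1 / (n + 1)) = 0
    rw [Finset.sum_sub_distrib]
    simp only [Finset.sum_ite_eq', Finset.mem_univ, if_true, Finset.sum_const,
      Finset.card_univ, Fintype.card_fin, nsmul_eq_mul]
    push_cast
    field_simp <;> simp⟩

/-- The lattice `Λ ⊂ H₀` generated by `λ_1, …, λ_{n+1}`. -/
def latL (n : ℕ) : AddSubgroup (H0 n) := AddSubgroup.closure (Set.range (lamb n))

/-- The coordinate permutation action of `Σ_{n+1}` on `H₀`. -/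
def permAct (n : ℕ) (σ : Equiv.Perm (Fin (n + 1))) (x : H0 n) : H0 n :=
  ⟨(WithLp.toLp 2 (fun i => (x : Amb n) (σ⁻¹ i)) : Amb n), by
    show ∑ i, (x : Amb n) (σ⁻¹ i) = 0
    rw [Equiv.sum_comp σ⁻¹ (fun i => (x : Amb n) i)]
    exact x.2⟩

/-- The center point `c ∈ H₀` with `c_a = (2a − n − 2)/(2(n+1))`, `a = 1, …, n+1`. -/
def ctr (n : ℕ) : H0 n :=
  ⟨(WithLp.toLp 2 (fun i => (2 * (i : ℕ) - n) / (2 * (n + 1))) : Amb n), by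
    show ∑ i : Fin (n + 1), ((2 * (i : ℕ) - (n : ℝ)) / (2 * (n + 1))) = 0
    rw [← Finset.sum_div]
    have h1 : ∑ i : Fin (n + 1), ((i : ℕ) : ℝ) = n * (n + 1) / 2 := by
      rw [Fin.sum_univ_eq_sum_range (fun i => (i : ℝ)) (n + 1)]
      have h2 := Finset.sum_range_id_mul_two (n + 1)
      have h3 : ((∑ i ∈ Finset.range (n + 1), i : ℕ) : ℝ) * 2 = (n + 1) * n := by
        exact_mod_cast congrArg (fun m : ℕ => (m : ℝ)) h2
      push_cast at h3 ⊢
      linarith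
    have h : ∑ i : Fin (n + 1), (2 * ((i : ℕ) : ℝ) - (n : ℝ)) = 0 := by
      rw [Finset.sum_sub_distrib, ← Finset.mul_sum, h1]
      simp [Finset.card_univ]
      ring
    rw [h, zero_div]⟩

/-- The centered `n`-permutohedron `𝔓 = conv {σ·c : σ ∈ Σ_{n+1}} ⊂ H₀`. -/
def Perm (n : ℕ) : Set (H0 n) :=
  convexHull ℝ {x | ∃ σ : Equiv.Perm (Fin (n + 1)), x = permAct n σ (ctr n)}

/-- The tile `𝔓 + μ` of the permutohedral tiling. -/
def tile (n : ℕ) (μ : H0 n) : Set (H0 n) := (fun x => μ + x) '' Perm n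

/-- `F` is a face of `Q`: the set of points of `Q` where some linear functional `ℓ`
attains its maximum over `Q`. -/
def IsFace {E : Type*} [AddCommGroup E] [Module ℝ E] (Q F : Set E) : Prop :=
  ∃ ℓ : E →ₗ[ℝ] ℝ, F = {x ∈ Q | ∀ y ∈ Q, ℓ y ≤ ℓ x}

/-- The dimension of a face: the dimension of its affine span. -/
def faceDim {E : Type*} [AddCommGroup E] [Module ℝ E] (F : Set E) : ℕ :=
  Module.finrank ℝ (affineSpan ℝ F).direction

/-- A vertex of `Q` is a point lying in a 0-dimensional face of `Q`. -/
def IsVertex {E : Type*} [AddCommGroup E] [Module ℝ E] (Q : Set E) (x : E) : Prop :=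
  ∃ F : Set E, IsFace Q F ∧ faceDim F = 0 ∧ x ∈ F

namespace Stmt7
open scoped RealInnerProductSpace

variable {n : ℕ}

lemma coe_sum_eq_zero (y : H0 n) : ∑ j, (y : Amb n) j = 0 := y.2

lemma lamb_coe (i j : Fin (n+1)) :
    (lamb n i : Amb n) j = (if j = i then 1 else 0) - 1/((n:ℝ)+1) := rfl

lemma ctr_coe (j : Fin (n+1)) :
    (ctr n : Amb n) j = (2*((j:ℕ):ℝ) - n)/(2*((n:ℝ)+1)) := rfl

lemma permAct_coe (σ : Equiv.Perm (Fin (n+1))) (x : H0 n) (j : Fin (n+1)) :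
    (permAct n σ x : Amb n) j = (x : Amb n) (σ⁻¹ j) := rfl

/-- Coordinate projections as additive homs. -/
def coordHom (n : ℕ) (j : Fin (n+1)) : H0 n →ₗ[ℝ] ℝ where
  toFun x := (x : Amb n) j
  map_add' _ _ := rfl
  map_smul' _ _ := rfl

@[simp] lemma coordHom_apply (j : Fin (n+1)) (x : H0 n) : coordHom n j x = (x : Amb n) j := rfl

lemma inner_coe (x y : H0 n) : (inner ℝ x y : ℝ) = ∑ j, (x : Amb n) j * (y : Amb n) j := by
  rw [Submodule.coe_inner]
  simp [PiLp.inner_apply, RCLike.inner_apply, mul_comm]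

lemma norm_le_iff (y μ : H0 n) :
    ‖y‖ ≤ ‖y - μ‖ ↔ 2 * ∑ j, (y : Amb n) j * (μ : Amb n) j ≤ ∑ j, ((μ : Amb n) j)^2 := by
  have h1 : ‖y - μ‖^2 = ‖y‖^2 - 2*(inner ℝ y μ : ℝ) + ‖μ‖^2 := norm_sub_sq_real y μ
  have h2 : ‖μ‖^2 = ∑ j, ((μ : Amb n) j)^2 := by
    rw [← real_inner_self_eq_norm_sq, inner_coe]
    simp [sq]
  rw [inner_coe y μ] at h1
  constructor
  · intro h
    nlinarith [norm_nonneg y, norm_nonneg (y - μ), mul_self_le_mul_self (norm_nonneg y) h]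
  · intro h
    nlinarith [norm_nonneg y, norm_nonneg (y - μ)]

end Stmt7

namespace Stmt7
variable {n : ℕ}

lemma mem_latL_coords {μ : H0 n} (h : μ ∈ latL n) :
    ∃ b : Fin (n+1) → ℤ, ∀ j, (μ : Amb n) j = (b j : ℝ) - ((∑ i, b i : ℤ) : ℝ)/((n:ℝ)+1) := by
  rw [latL, ← Submodule.span_int_eq_addSubgroupClosure, Submodule.mem_toAddSubgroup] at h
  obtain ⟨b, hb⟩ := (Submodule.mem_span_range_iff_exists_fun ℤ).mp h
  refine ⟨b, fun j => ?_⟩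
  have : (μ : Amb n) j = coordHom n j μ := rfl
  rw [this, ← hb, map_sum]
  have h2 : ∀ i, coordHom n j (b i • lamb n i)
      = (b i : ℝ) * ((if j = i then 1 else 0) - 1/((n:ℝ)+1)) := by
    intro i
    rw [map_zsmul]
    simp [lamb_coe, zsmul_eq_mul]
  rw [Finset.sum_congr rfl (fun i _ => h2 i)]
  have h3 : ∀ i, (b i : ℝ) * ((if j = i then 1 else 0) - 1/((n:ℝ)+1))
      = (if j = i then (b i : ℝ) else 0) - (b i : ℝ) * (1/((n:ℝ)+1)) := by
    intro i; split_ifs <;> ring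
  rw [Finset.sum_congr rfl (fun i _ => h3 i), Finset.sum_sub_distrib,
    Finset.sum_ite_eq, if_pos (Finset.mem_univ j), ← Finset.sum_mul]
  push_cast
  ring

end Stmt7

namespace Stmt7
variable {n : ℕ}

lemma count_lt (i : Fin (n+1)) :
    ∑ m : Fin (n+1), (if m < i then (1:ℤ) else 0) = (i : ℕ) := by
  rw [Finset.sum_boole]
  norm_num [Finset.filter_gt_eq_Iio, Fin.card_Iio]

lemma count_gt (i : Fin (n+1)) :
    ∑ m : Fin (n+1), (if i < m then (1:ℤ) else 0) = ((n : ℤ) - (i : ℕ)) := by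
  rw [Finset.sum_boole]
  rw [Finset.filter_lt_eq_Ioi, Fin.card_Ioi]
  have : (i : ℕ) ≤ n := Fin.is_le i
  push_cast [Nat.sub_sub]
  omega

lemma key_int (p : Equiv.Perm (Fin (n+1))) (b : Fin (n+1) → ℤ) :
    ∑ j, (2 * ((p j : ℕ) : ℤ) - n) * b j
      ≤ ((n:ℤ)+1) * ∑ j, (b j)^2 - (∑ j, b j)^2 := by
  set ε : Fin (n+1) → Fin (n+1) → ℤ :=
    fun j k => (if p k < p j then 1 else 0) - (if p j < p k then 1 else 0) with hε
  have hrow : ∀ j, ∑ k, ε j k = 2 * ((p j : ℕ) : ℤ) - n := by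
    intro j
    rw [hε]
    simp only
    rw [Finset.sum_sub_distrib,
      Equiv.sum_comp p (fun m => if m < p j then (1:ℤ) else 0),
      Equiv.sum_comp p (fun m => if p j < m then (1:ℤ) else 0),
      count_lt, count_gt]
    ring
  have hskew : ∀ j k, ε j k = - ε k j := by
    intro j k; rw [hε]; simp only; ring
  have hcol : ∀ k, ∑ j, ε j k = -(2 * ((p k : ℕ) : ℤ) - n) := by
    intro k
    rw [Finset.sum_congr rfl (fun j _ => hskew j k), Finset.sum_neg_distrib, hrow]
  have expand : (2:ℤ) * ∑ j, (2 * ((p j : ℕ) : ℤ) - n) * b j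
      = ∑ j, ∑ k, ε j k * (b j - b k) := by
    have h1 : ∀ j k, ε j k * (b j - b k) = ε j k * b j - ε j k * b k :=
      fun j k => by ring
    simp_rw [h1]
    rw [Finset.sum_congr rfl (fun j _ => Finset.sum_sub_distrib _ _), Finset.sum_sub_distrib]
    have h2 : ∑ j, ∑ k, ε j k * b j = ∑ j, (2 * ((p j : ℕ) : ℤ) - n) * b j := by
      refine Finset.sum_congr rfl (fun j _ => ?_)
      rw [← Finset.sum_mul, hrow]
    have h3 : ∑ j, ∑ k, ε j k * b k = - ∑ j, (2 * ((p j : ℕ) : ℤ) - n) * b j := by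
      rw [Finset.sum_comm, ← Finset.sum_neg_distrib]
      refine Finset.sum_congr rfl (fun k _ => ?_)
      rw [← Finset.sum_mul, hcol]
      ring
    rw [h2, h3]
    ring
  have bound : ∀ j k, ε j k * (b j - b k) ≤ (b j - b k)^2 := by
    intro j k
    have habs : |b j - b k| ≤ (b j - b k)^2 := by
      rcases eq_or_ne (b j - b k) 0 with h | h
      · simp [h]
      · have h1 := Int.one_le_abs h
        nlinarith [sq_abs (b j - b k), abs_nonneg (b j - b k)]
    have hcases : ε j k = 1 ∨ ε j k = 0 ∨ ε j k = -1 := by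
      rw [hε]; simp only; split_ifs <;> norm_num
    rcases hcases with h | h | h <;> rw [h]
    · exact le_trans (by rw [one_mul]; exact le_abs_self _) habs
    · rw [zero_mul]; positivity
    · refine le_trans ?_ habs
      rw [neg_one_mul]
      exact neg_le_abs _
  have sq_expand : ∑ j, ∑ k, ((b j - b k)^2 : ℤ)
      = 2 * (((n:ℤ)+1) * ∑ j, (b j)^2 - (∑ j, b j)^2) := by
    have h1 : ∀ j k, ((b j - b k)^2 : ℤ) = b j^2 + b k^2 - 2*(b j * b k) :=
      fun j k => by ring
    simp_rw [h1]
    simp only [Finset.sum_add_distrib, Finset.sum_sub_distrib, Finset.sum_const,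
      Finset.card_univ, Fintype.card_fin, nsmul_eq_mul, ← Finset.mul_sum, ← Finset.sum_mul]
    push_cast
    ring
  have hle : ∑ j, ∑ k, ε j k * (b j - b k) ≤ ∑ j, ∑ k, ((b j - b k)^2 : ℤ) :=
    Finset.sum_le_sum fun j _ => Finset.sum_le_sum fun k _ => bound j k
  rw [← expand, sq_expand] at hle
  linarith

end Stmt7

namespace Stmt7
variable {n : ℕ}

lemma vertex_mem (σ : Equiv.Perm (Fin (n+1))) {μ : H0 n} (hμ : μ ∈ latL n) :
    ‖permAct n σ (ctr n)‖ ≤ ‖permAct n σ (ctr n) - μ‖ := by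
  rw [norm_le_iff]
  obtain ⟨b, hb⟩ := mem_latL_coords hμ
  set v : H0 n := permAct n σ (ctr n) with hv
  have hpos : (0:ℝ) < (n:ℝ) + 1 := by positivity
  set S : ℝ := ((∑ i, b i : ℤ) : ℝ) with hS
  have hsb : ∑ j, ((b j : ℤ) : ℝ) = S := by rw [hS]; push_cast; ring
  have key : ∑ j, (2 * ((σ⁻¹ j : ℕ) : ℝ) - n) * (b j : ℝ)
      ≤ ((n:ℝ)+1) * ∑ j, ((b j : ℝ))^2 - S^2 := by
    rw [← hsb]
    exact_mod_cast key_int σ⁻¹ b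
  have hvj : ∀ j, (v : Amb n) j = (2 * ((σ⁻¹ j : ℕ) : ℝ) - n) / (2*((n:ℝ)+1)) := by
    intro j; rw [hv, permAct_coe, ctr_coe]
  have hvsum : ∑ j, (v : Amb n) j = 0 := v.2
  have hL : ∑ j, (v : Amb n) j * (μ : Amb n) j
      = (∑ j, (2 * ((σ⁻¹ j : ℕ) : ℝ) - n) * (b j : ℝ)) / (2*((n:ℝ)+1)) := by
    have h1 : ∀ j, (v : Amb n) j * (μ : Amb n) j
        = (v : Amb n) j * (b j : ℝ) - (v : Amb n) j * (S/((n:ℝ)+1)) := by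
      intro j; rw [hb j]; ring
    rw [Finset.sum_congr rfl (fun j _ => h1 j), Finset.sum_sub_distrib, ← Finset.sum_mul,
      hvsum, zero_mul, sub_zero]
    rw [Finset.sum_div]
    refine Finset.sum_congr rfl (fun j _ => ?_)
    rw [hvj j]; ring
  have hR : ∑ j, ((μ : Amb n) j)^2
      = ∑ j, ((b j:ℝ))^2 - S^2/((n:ℝ)+1) := by
    have h1 : ∀ j, ((μ : Amb n) j)^2
        = ((b j:ℝ))^2 - (b j:ℝ)*(2*S/((n:ℝ)+1)) + (S/((n:ℝ)+1))^2 := by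
      intro j; rw [hb j]; ring
    rw [Finset.sum_congr rfl (fun j _ => h1 j)]
    rw [Finset.sum_add_distrib, Finset.sum_sub_distrib, ← Finset.sum_mul, hsb,
      Finset.sum_const, Finset.card_univ, Fintype.card_fin, nsmul_eq_mul]
    push_cast
    field_simp
    ring
  rw [hL, hR]
  have h2 : 2 * ((∑ j, (2 * ((σ⁻¹ j : ℕ) : ℝ) - n) * (b j : ℝ)) / (2*((n:ℝ)+1)))
      = (∑ j, (2 * ((σ⁻¹ j : ℕ) : ℝ) - n) * (b j : ℝ)) / ((n:ℝ)+1) := by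
    field_simp
  rw [h2, div_le_iff₀ hpos]
  have h3 : (∑ j, ((b j:ℝ))^2 - S^2/((n:ℝ)+1)) * ((n:ℝ)+1)
      = ((n:ℝ)+1) * ∑ j, ((b j:ℝ))^2 - S^2 := by
    field_simp
  rw [h3]
  exact key

end Stmt7

namespace Stmt7
variable {n : ℕ}

lemma muS_coords (S : Finset (Fin (n+1))) (j : Fin (n+1)) :
    ((∑ i ∈ S, lamb n i : H0 n) : Amb n) j
      = (if j ∈ S then 1 else 0) - (S.card : ℝ)/((n:ℝ)+1) := by
  have : ((∑ i ∈ S, lamb n i : H0 n) : Amb n) j = coordHom n j (∑ i ∈ S, lamb n i) := rfl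
  rw [this, map_sum]
  simp only [coordHom_apply, lamb_coe]
  rw [Finset.sum_sub_distrib, Finset.sum_ite_eq, Finset.sum_const, nsmul_eq_mul]
  ring

lemma subset_sum_le {y : H0 n} (hy : ∀ μ ∈ latL n, ‖y‖ ≤ ‖y - μ‖)
    (S : Finset (Fin (n+1))) :
    ∑ j ∈ S, (y : Amb n) j ≤ ((S.card : ℝ) * ((n:ℝ)+1 - S.card)) / (2*((n:ℝ)+1)) := by
  set μ : H0 n := ∑ i ∈ S, lamb n i with hμdef
  have hμ : μ ∈ latL n := by
    exact sum_mem (fun i _ => AddSubgroup.subset_closure ⟨i, rfl⟩)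
  have h := (norm_le_iff y μ).mp (hy μ hμ)
  have hpos : (0:ℝ) < (n:ℝ) + 1 := by positivity
  set k : ℝ := (S.card : ℝ) with hk
  have hkle : k ≤ (n:ℝ)+1 := by
    rw [hk]
    have := Finset.card_le_univ S
    rw [Fintype.card_fin] at this
    exact_mod_cast this
  set q : ℝ := k/((n:ℝ)+1) with hq
  -- LHS of h
  have hL : ∑ j, (y : Amb n) j * (μ : Amb n) j = ∑ j ∈ S, (y : Amb n) j := by
    have h1 : ∀ j, (y : Amb n) j * (μ : Amb n) j
        = (if j ∈ S then (y : Amb n) j else 0) - (y : Amb n) j * q := by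
      intro j; rw [hμdef, muS_coords]; split_ifs <;> ring
    rw [Finset.sum_congr rfl (fun j _ => h1 j), Finset.sum_sub_distrib, ← Finset.sum_mul,
      coe_sum_eq_zero, zero_mul, sub_zero, Finset.sum_ite_mem, Finset.univ_inter]
  -- RHS of h
  have hR : ∑ j, ((μ : Amb n) j)^2 = k*(1-q)^2 + ((n:ℝ)+1-k)*q^2 := by
    have h1 : ∀ j, ((μ : Amb n) j)^2 = if j ∈ S then (1-q)^2 else q^2 := by
      intro j; rw [hμdef, muS_coords]; split_ifs <;> ring
    rw [Finset.sum_congr rfl (fun j _ => h1 j), Finset.sum_ite, Finset.sum_const,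
      Finset.sum_const, nsmul_eq_mul, nsmul_eq_mul]
    rw [Finset.filter_mem_eq_inter, Finset.univ_inter]
    have hcompl : (Finset.univ.filter (fun j => j ∉ S)).card = (n+1) - S.card := by
      have hc : Finset.univ.filter (fun j => j ∉ S) = Sᶜ := by ext j; simp
      rw [hc, Finset.card_compl, Fintype.card_fin]
    rw [hcompl]
    have hle : S.card ≤ n + 1 := by
      have := Finset.card_le_univ S
      rwa [Fintype.card_fin] at this
    have : (((n+1) - S.card : ℕ) : ℝ) = (n:ℝ)+1-k := by
      rw [hk]
      push_cast [Nat.cast_sub hle]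
      ring
    rw [this, hk]
  rw [hL, hR] at h
  -- h : 2 * ∑ ≤ k(1-q)² + (n+1-k)q²; simplify RHS to k(n+1-k)/(n+1)
  have hRval : k*(1-q)^2 + ((n:ℝ)+1-k)*q^2 = k*((n:ℝ)+1-k)/((n:ℝ)+1) := by
    rw [hq]
    field_simp
    ring
  rw [hRval] at h
  rw [le_div_iff₀ (by positivity : (0:ℝ) < 2*((n:ℝ)+1))]
  rw [div_eq_mul_inv] at h
  have h2 := mul_le_mul_of_nonneg_left h (le_of_lt hpos)
  have h3 : ((n:ℝ)+1)*(k*((n:ℝ)+1-k)*((n:ℝ)+1)⁻¹) = k*((n:ℝ)+1-k) := by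
    field_simp
  rw [h3] at h2
  have h4 : (∑ j ∈ S, (y : Amb n) j) * (2*((n:ℝ)+1))
      = ((n:ℝ)+1)*(2*∑ j ∈ S, (y : Amb n) j) := by ring
  rw [h4]
  exact h2

end Stmt7

namespace Stmt7
variable {n : ℕ}

lemma abel_nonpos (N : ℕ) (W D : ℕ → ℝ) (hW : ∀ i, i + 1 < N → W i ≤ W (i+1))
    (hD : ∀ m, m ≤ N → 0 ≤ ∑ j ∈ Finset.range m, D j)
    (hT : ∑ j ∈ Finset.range N, D j = 0) :
    ∑ j ∈ Finset.range N, W j * D j ≤ 0 := by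
  have h := Finset.sum_range_by_parts W D N
  simp only [smul_eq_mul] at h
  rw [hT, mul_zero, zero_sub] at h
  rw [h, neg_nonpos]
  apply Finset.sum_nonneg
  intro i hi
  rw [Finset.mem_range] at hi
  exact mul_nonneg (sub_nonneg.2 (hW i (by omega))) (hD (i+1) (by omega))

lemma sumC (m : ℕ) :
    ∑ j ∈ Finset.range m, ((2*(j:ℝ) - n)/(2*((n:ℝ)+1)))
      = ((m:ℝ) * ((m:ℝ)-1-n)) / (2*((n:ℝ)+1)) := by
  induction m with
  | zero => simp
  | succ m ih =>
    rw [Finset.sum_range_succ, ih]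
    have hpos : (0:ℝ) < 2*((n:ℝ)+1) := by positivity
    field_simp
    push_cast
    ring

end Stmt7

namespace Stmt7
variable {n : ℕ}

lemma card_filter_val_lt (m : ℕ) (hm : m ≤ n+1) :
    (Finset.univ.filter (fun j : Fin (n+1) => (j:ℕ) < m)).card = m := by
  rcases Nat.lt_or_ge m (n+1) with h | h
  · have : Finset.univ.filter (fun j : Fin (n+1) => (j:ℕ) < m) = Finset.Iio ⟨m, h⟩ := by
      ext j
      simp [Fin.lt_def]
    rw [this, Fin.card_Iio]
  · have hm' : m = n+1 := le_antisymm hm h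
    subst hm'
    have : Finset.univ.filter (fun j : Fin (n+1) => (j:ℕ) < n+1) = Finset.univ := by
      ext j; simp [j.isLt, Fin.is_le j]
    rw [this, Finset.card_univ, Fintype.card_fin]

lemma x_eq_sum_lamb (x : H0 n) : x = ∑ j, (x : Amb n) j • lamb n j := by
  apply Subtype.ext
  refine PiLp.ext (fun k => ?_)
  have h1 : ((∑ j, (x : Amb n) j • lamb n j : H0 n) : Amb n) k
      = coordHom n k (∑ j, (x : Amb n) j • lamb n j) := rfl
  show (x : Amb n) k = _
  rw [h1, map_sum]
  have h2 : ∀ j, coordHom n k ((x : Amb n) j • lamb n j)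
      = (x : Amb n) j * ((if k = j then 1 else 0) - 1/((n:ℝ)+1)) := by
    intro j
    rw [map_smul]
    simp [coordHom_apply, lamb_coe]
  rw [Finset.sum_congr rfl (fun j _ => h2 j)]
  have h3 : ∀ j, (x : Amb n) j * ((if k = j then 1 else 0) - 1/((n:ℝ)+1))
      = (if k = j then (x : Amb n) j else 0) - (x : Amb n) j * (1/((n:ℝ)+1)) := by
    intro j; split_ifs <;> ring
  rw [Finset.sum_congr rfl (fun j _ => h3 j), Finset.sum_sub_distrib,
    Finset.sum_ite_eq, if_pos (Finset.mem_univ k), ← Finset.sum_mul, coe_sum_eq_zero,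
    zero_mul, sub_zero]

lemma voronoi_subset {y : H0 n} (hy : ∀ μ ∈ latL n, ‖y‖ ≤ ‖y - μ‖) : y ∈ Perm n := by
  by_contra hyP
  have hfin : {x : H0 n | ∃ σ : Equiv.Perm (Fin (n+1)), x = permAct n σ (ctr n)}.Finite := by
    have hrange : {x : H0 n | ∃ σ : Equiv.Perm (Fin (n+1)), x = permAct n σ (ctr n)}
        = Set.range (fun σ => permAct n σ (ctr n)) := by
      ext x; simp [Set.mem_setOf_eq, Set.mem_range, eq_comm]
    rw [hrange]
    exact Set.finite_range _
  have hclosed : IsClosed (Perm n) := (hfin.isCompact_convexHull ℝ).isClosed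
  obtain ⟨f, u, hfP, hfy⟩ :=
    geometric_hahn_banach_closed_point (convex_convexHull ℝ _) hclosed hyP
  set w : Fin (n+1) → ℝ := fun j => f (lamb n j) with hw
  have hf_eq : ∀ x : H0 n, f x = ∑ j, (x : Amb n) j * w j := by
    intro x
    conv_lhs => rw [x_eq_sum_lamb x]
    rw [map_sum]
    refine Finset.sum_congr rfl (fun j _ => ?_)
    rw [map_smul, smul_eq_mul]
  set π := Tuple.sort w with hπ
  have hmono : Monotone (w ∘ π) := Tuple.monotone_sort w
  set v : H0 n := permAct n π (ctr n) with hv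
  have hvP : v ∈ Perm n := subset_convexHull ℝ _ ⟨π, rfl⟩
  have hfle : f y ≤ f v := by
    rw [hf_eq y, hf_eq v]
    have hyσ : ∑ j, (y : Amb n) j * w j = ∑ k, (y : Amb n) (π k) * w (π k) :=
      (Equiv.sum_comp π (fun j => (y : Amb n) j * w j)).symm
    have hvσ : ∑ j, (v : Amb n) j * w j = ∑ k, (ctr n : Amb n) k * w (π k) := by
      rw [← Equiv.sum_comp π (fun j => (v : Amb n) j * w j)]
      refine Finset.sum_congr rfl (fun k _ => ?_)
      rw [hv, permAct_coe, Equiv.Perm.inv_def, Equiv.symm_apply_apply]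
    rw [hyσ, hvσ]
    set W : ℕ → ℝ := fun i => if h : i < n+1 then w (π ⟨i, h⟩) else w (π (Fin.last n)) with hW
    set Y : ℕ → ℝ := fun i => if h : i < n+1 then (y : Amb n) (π ⟨i, h⟩) else 0 with hY
    set C : ℕ → ℝ := fun i => (2*(i:ℝ) - (n:ℝ))/(2*((n:ℝ)+1)) with hC
    have hYW : ∑ k, (y : Amb n) (π k) * w (π k) = ∑ i ∈ Finset.range (n+1), W i * Y i := by
      rw [← Fin.sum_univ_eq_sum_range (fun i => W i * Y i) (n+1)]
      refine Finset.sum_congr rfl (fun k _ => ?_)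
      simp only [hW, hY, k.isLt, dif_pos, Fin.eta]
      ring
    have hCW : ∑ k, (ctr n : Amb n) k * w (π k) = ∑ i ∈ Finset.range (n+1), W i * C i := by
      rw [← Fin.sum_univ_eq_sum_range (fun i => W i * C i) (n+1)]
      refine Finset.sum_congr rfl (fun k _ => ?_)
      simp only [hW, hC, k.isLt, dif_pos, Fin.eta, ctr_coe]
      ring
    rw [hYW, hCW]
    have habel : ∑ i ∈ Finset.range (n+1), W i * (Y i - C i) ≤ 0 := by
      apply abel_nonpos
      · intro i hi
        have h1 : i < n+1 := by omega
        simp only [hW, dif_pos h1, dif_pos hi]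
        exact hmono (Fin.mk_le_mk.mpr (Nat.le_succ i))
      · intro m hm
        rw [Finset.sum_sub_distrib, sub_nonneg]
        have hCm : ∑ j ∈ Finset.range m, C j = ((m:ℝ) * ((m:ℝ)-1-(n:ℝ))) / (2*((n:ℝ)+1)) :=
          sumC m
        set T : Finset (Fin (n+1)) :=
          Finset.image π (Finset.univ.filter (fun j : Fin (n+1) => (j:ℕ) < m)) with hT
        have hYm : ∑ j ∈ Finset.range m, Y j = ∑ i ∈ T, (y : Amb n) i := by
          rw [hT, Finset.sum_image (fun a _ b _ hab => π.injective hab)]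
          refine Finset.sum_nbij' (i := fun a => (⟨a % (n+1), Nat.mod_lt _ (Nat.succ_pos n)⟩ : Fin (n+1)))
            (j := fun b => (b : ℕ)) ?_ ?_ ?_ ?_ ?_
          · intro a ha
            rw [Finset.mem_range] at ha
            simp [Nat.mod_eq_of_lt (by omega : a < n+1)]
            omega
          · intro b hb
            rw [Finset.mem_filter] at hb
            rw [Finset.mem_range]
            exact hb.2
          · intro a ha
            rw [Finset.mem_range] at ha
            simp [Nat.mod_eq_of_lt (by omega : a < n+1)]
          · intro b hb
            simp [Nat.mod_eq_of_lt b.isLt]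
          · intro a ha
            rw [Finset.mem_range] at ha
            have h1 : a < n+1 := by omega
            simp only [hY, dif_pos h1]
            have h2 : (⟨a % (n+1), Nat.mod_lt _ (Nat.succ_pos n)⟩ : Fin (n+1)) = ⟨a, h1⟩ := by
              ext
              simp [Nat.mod_eq_of_lt h1]
            rw [h2]
        have hTcard : T.card = m := by
          rw [hT, Finset.card_image_of_injective _ π.injective,
            card_filter_val_lt m hm]
        have hTCcard : Tᶜ.card = (n+1) - m := by
          rw [Finset.card_compl, Fintype.card_fin, hTcard]
        have hbound := subset_sum_le hy Tᶜ
        rw [hTCcard] at hbound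
        have hsplit : ∑ i ∈ T, (y : Amb n) i + ∑ i ∈ Tᶜ, (y : Amb n) i = 0 := by
          rw [Finset.sum_add_sum_compl]
          exact coe_sum_eq_zero y
        have hcast : (((n+1) - m : ℕ) : ℝ) = (n:ℝ)+1-(m:ℝ) := by
          push_cast [Nat.cast_sub hm]
          ring
        rw [hcast] at hbound
        rw [hYm, hCm]
        have hfinal : ((m:ℝ) * ((m:ℝ)-1-(n:ℝ))) / (2*((n:ℝ)+1))
            = -((((n:ℝ)+1-(m:ℝ)) * (((n:ℝ)+1) - (((n:ℝ)+1-(m:ℝ))))) / (2*((n:ℝ)+1))) := by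
          field_simp
          ring
        rw [hfinal]
        linarith [hbound, hsplit]
      · rw [Finset.sum_sub_distrib]
        have hYtot : ∑ j ∈ Finset.range (n+1), Y j = 0 := by
          rw [← Fin.sum_univ_eq_sum_range Y (n+1)]
          have : ∀ k : Fin (n+1), Y (k : ℕ) = (y : Amb n) (π k) := by
            intro k
            simp only [hY, k.isLt, dif_pos, Fin.eta]
          rw [Finset.sum_congr rfl (fun k _ => this k)]
          rw [Equiv.sum_comp π (fun j => (y : Amb n) j)]
          exact coe_sum_eq_zero y
        have hCtot : ∑ j ∈ Finset.range (n+1), C j = 0 := by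
          rw [sumC]
          push_cast
          ring
        rw [hYtot, hCtot, sub_zero]
    have hsub : ∑ i ∈ Finset.range (n+1), W i * (Y i - C i)
        = ∑ i ∈ Finset.range (n+1), W i * Y i - ∑ i ∈ Finset.range (n+1), W i * C i := by
      rw [← Finset.sum_sub_distrib]
      refine Finset.sum_congr rfl (fun i _ => by ring)
    rw [hsub] at habel
    linarith
  linarith [hfP v hvP, hfy, hfle]

end Stmt7

/-- The centered `n`-permutohedron is the closed Voronoi cell at the
origin of the lattice `Λ ⊂ H₀`: `𝔓 = {y ∈ H₀ : ∀ μ ∈ Λ, ‖y‖ ≤ ‖y − μ‖}`. -/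
theorem statement7 (n : ℕ) (hn : 1 ≤ n) :
    Perm n = {y : H0 n | ∀ μ ∈ latL n, ‖y‖ ≤ ‖y - μ‖} := by
  apply Set.Subset.antisymm
  · -- P ⊆ V
    apply convexHull_min
    · rintro x ⟨σ, rfl⟩ μ hμ
      exact Stmt7.vertex_mem σ hμ
    · -- V is convex
      intro x hx z hz a b ha hb hab
      intro μ hμ
      have hx' := (Stmt7.norm_le_iff x μ).mp (hx μ hμ)
      have hz' := (Stmt7.norm_le_iff z μ).mp (hz μ hμ)
      rw [Stmt7.norm_le_iff]
      have hco : ∀ j, ((a • x + b • z : H0 n) : Amb n) j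
          = a * (x : Amb n) j + b * (z : Amb n) j := fun j => rfl
      have hsum : ∑ j, ((a • x + b • z : H0 n) : Amb n) j * (μ : Amb n) j
          = a * ∑ j, (x : Amb n) j * (μ : Amb n) j
            + b * ∑ j, (z : Amb n) j * (μ : Amb n) j := by
        rw [Finset.mul_sum, Finset.mul_sum, ← Finset.sum_add_distrib]
        refine Finset.sum_congr rfl (fun j _ => ?_)
        rw [hco j]; ring
      rw [hsum]
      have haux : (a + b) * (∑ j, ((μ : Amb n) j)^2) = ∑ j, ((μ : Amb n) j)^2 := by
        rw [hab, one_mul]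
      linarith [mul_le_mul_of_nonneg_left hx' ha, mul_le_mul_of_nonneg_left hz' hb, haux]
  · -- V ⊆ P
    intro y hy
    exact Stmt7.voronoi_subset hy

end
end

section
/- Let i ≠ j ∈ {1,…,n+1} and k ∈ ℤ, and let s : H₀ → H₀ be the affine reflection s(x) = x − (x_i − x_j − k)(e_i − e_j), whose fixed-point set is the hyperplane {x ∈ H₀ : x_i − x_j = k}. (s belongs to the affine Weyl group Λ ⋊ Σ_{n+1}: its linear part is the transposition of coordinates i and j, and its translation part k(λ_i − λ_j) lies in Λ.) If F is a nonempty face of the permutohedral tiling with s(F) = F, then s(𝔓 + μ) = 𝔓 + μ for every μ ∈ Λ with F ⊆ 𝔓 + μ; that is, s maps each tile containing F to itself. -/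
open Finset Pointwise

noncomputable section

/-- The affine reflection `s(x) = x − (x_i − x_j − k)(e_i − e_j)` of `H₀`, an element of
the affine Weyl group `Λ ⋊ Σ_{n+1}` fixing the hyperplane `{x : x_i − x_j = k}`
(note `e_i − e_j = λ_i − λ_j`). -/
def reflIJ (n : ℕ) (i j : Fin (n + 1)) (k : ℤ) (x : H0 n) : H0 n :=
  x - (((x : Amb n) i - (x : Amb n) j - (k : ℝ)) • (lamb n i - lamb n j))


namespace Stmt13

variable {n : ℕ}

lemma H0_ext {x y : H0 n} (h : ∀ a, (x : Amb n) a = (y : Amb n) a) : x = y :=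
  Subtype.ext (PiLp.ext h)

lemma coord_add (x y : H0 n) (a : Fin (n+1)) :
    ((x + y : H0 n) : Amb n) a = (x : Amb n) a + (y : Amb n) a := rfl

lemma coord_smul (c : ℝ) (x : H0 n) (a : Fin (n+1)) :
    ((c • x : H0 n) : Amb n) a = c * (x : Amb n) a := rfl

lemma lamb_coord (i a : Fin (n+1)) :
    ((lamb n i : Amb n)) a = (if a = i then 1 else 0) - 1/(n+1) := rfl

lemma ctr_coord (a : Fin (n+1)) :
    ((ctr n : Amb n)) a = (2 * ((a : ℕ) : ℝ) - n) / (2 * (n + 1)) := rfl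

lemma permAct_coord (σ : Equiv.Perm (Fin (n+1))) (x : H0 n) (a : Fin (n+1)) :
    ((permAct n σ x : Amb n)) a = (x : Amb n) (σ⁻¹ a) := rfl

lemma reflIJ_coord (i j : Fin (n+1)) (k : ℤ) (x : H0 n) (a : Fin (n+1)) :
    ((reflIJ n i j k x : Amb n)) a
      = (x : Amb n) a - ((x : Amb n) i - (x : Amb n) j - k)
          * ((if a = i then (1:ℝ) else 0) - if a = j then 1 else 0) := by
  show (x : Amb n) a - ((x : Amb n) i - (x : Amb n) j - k)
      * (((if a = i then (1:ℝ) else 0) - 1/(n+1)) - ((if a = j then (1:ℝ) else 0) - 1/(n+1))) = _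
  ring

lemma reflIJ_i {i j : Fin (n+1)} (hij : i ≠ j) (k : ℤ) (x : H0 n) :
    ((reflIJ n i j k x : Amb n)) i = (x : Amb n) j + k := by
  rw [reflIJ_coord]
  simp [hij]
  ring

lemma reflIJ_j {i j : Fin (n+1)} (hij : i ≠ j) (k : ℤ) (x : H0 n) :
    ((reflIJ n i j k x : Amb n)) j = (x : Amb n) i - k := by
  rw [reflIJ_coord]
  simp [hij.symm]
  ring

lemma reflIJ_invol {i j : Fin (n+1)} (hij : i ≠ j) (k : ℤ) (x : H0 n) :
    reflIJ n i j k (reflIJ n i j k x) = x := by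
  apply H0_ext
  intro a
  rw [reflIJ_coord, reflIJ_i hij, reflIJ_j hij, reflIJ_coord]
  ring

lemma permAct_mul (σ τ : Equiv.Perm (Fin (n+1))) (x : H0 n) :
    permAct n σ (permAct n τ x) = permAct n (σ * τ) x := by
  apply H0_ext
  intro a
  rw [permAct_coord, permAct_coord, permAct_coord]
  rw [mul_inv_rev]
  rfl

def permActL (σ : Equiv.Perm (Fin (n+1))) : H0 n →ₗ[ℝ] H0 n where
  toFun := permAct n σ
  map_add' x y := H0_ext fun a => rfl
  map_smul' c x := H0_ext fun a => rfl

lemma permAct_mem_Perm (σ : Equiv.Perm (Fin (n+1))) {y : H0 n} (hy : y ∈ Perm n) :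
    permAct n σ y ∈ Perm n := by
  have h : permAct n σ y
      ∈ permActL (n := n) σ '' convexHull ℝ {x | ∃ τ : Equiv.Perm (Fin (n+1)), x = permAct n τ (ctr n)} :=
    ⟨y, hy, rfl⟩
  rw [LinearMap.image_convexHull] at h
  refine convexHull_mono ?_ h
  rintro z ⟨w, ⟨τ, rfl⟩, rfl⟩
  exact ⟨σ * τ, (permAct_mul σ τ (ctr n)).symm⟩

lemma reflIJ_zero {i j : Fin (n+1)} (hij : i ≠ j) (y : H0 n) :
    reflIJ n i j 0 y = permAct n (Equiv.swap i j) y := by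
  apply H0_ext
  intro a
  rw [reflIJ_coord, permAct_coord, Equiv.swap_inv]
  rcases eq_or_ne a i with rfl | hai
  · rw [Equiv.swap_apply_left]
    simp [hij]
  · rcases eq_or_ne a j with rfl | haj
    · rw [Equiv.swap_apply_right]
      simp [hij.symm, hij]
    · rw [Equiv.swap_apply_of_ne_of_ne hai haj]
      simp [hai, haj]

lemma abs_sub_le_of_mem_Perm (i j : Fin (n+1)) {y : H0 n} (hy : y ∈ Perm n) :
    |(y : Amb n) i - (y : Amb n) j| ≤ (n : ℝ) / (n + 1) := by
  have hn1 : (0:ℝ) < (n:ℝ) + 1 := by positivity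
  have hC : Convex ℝ {x : H0 n | |(x : Amb n) i - (x : Amb n) j| ≤ (n : ℝ) / (n + 1)} := by
    intro x hx z hz a b ha hb hab
    simp only [Set.mem_setOf_eq] at *
    have hco : ((a • x + b • z : H0 n) : Amb n) i - ((a • x + b • z : H0 n) : Amb n) j
        = a * ((x : Amb n) i - (x : Amb n) j) + b * ((z : Amb n) i - (z : Amb n) j) := by
      rw [coord_add, coord_add, coord_smul, coord_smul, coord_smul, coord_smul]
      ring
    rw [hco]
    calc |a * ((x : Amb n) i - (x : Amb n) j) + b * ((z : Amb n) i - (z : Amb n) j)|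
        ≤ |a * ((x : Amb n) i - (x : Amb n) j)| + |b * ((z : Amb n) i - (z : Amb n) j)| :=
          abs_add_le _ _
      _ ≤ a * ((n : ℝ) / (n + 1)) + b * ((n : ℝ) / (n + 1)) := by
          rw [abs_mul, abs_mul, abs_of_nonneg ha, abs_of_nonneg hb]
          gcongr
      _ = (n : ℝ) / (n + 1) := by rw [← add_mul, hab, one_mul]
  refine convexHull_min ?_ hC hy
  rintro z ⟨σ, rfl⟩
  simp only [Set.mem_setOf_eq, permAct_coord, ctr_coord]
  have hdiff : (2 * (((σ⁻¹ i : Fin (n+1)) : ℕ) : ℝ) - n) / (2 * (n + 1))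
      - (2 * (((σ⁻¹ j : Fin (n+1)) : ℕ) : ℝ) - n) / (2 * (n + 1))
      = ((((σ⁻¹ i : Fin (n+1)) : ℕ) : ℝ) - (((σ⁻¹ j : Fin (n+1)) : ℕ) : ℝ)) / (n + 1) := by
    field_simp
    ring
  rw [hdiff, abs_div, abs_of_pos hn1, div_le_div_iff_of_pos_right hn1]
  have h1 : ((σ⁻¹ i : Fin (n+1)) : ℕ) ≤ n := Fin.is_le _
  have h2 : ((σ⁻¹ j : Fin (n+1)) : ℕ) ≤ n := Fin.is_le _
  have h1' : (((σ⁻¹ i : Fin (n+1)) : ℕ) : ℝ) ≤ n := by exact_mod_cast h1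
  have h2' : (((σ⁻¹ j : Fin (n+1)) : ℕ) : ℝ) ≤ n := by exact_mod_cast h2
  have h3 : (0:ℝ) ≤ (((σ⁻¹ i : Fin (n+1)) : ℕ) : ℝ) := Nat.cast_nonneg _
  have h4 : (0:ℝ) ≤ (((σ⁻¹ j : Fin (n+1)) : ℕ) : ℝ) := Nat.cast_nonneg _
  rw [abs_le]
  constructor <;> linarith

lemma lat_int (i j : Fin (n+1)) {μ : H0 n} (hμ : μ ∈ latL n) :
    ∃ m : ℤ, (μ : Amb n) i - (μ : Amb n) j = m := by
  induction hμ using AddSubgroup.closure_induction with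
  | mem x hx =>
      obtain ⟨a, rfl⟩ := hx
      refine ⟨(if i = a then 1 else 0) - (if j = a then 1 else 0), ?_⟩
      rw [lamb_coord, lamb_coord]
      push_cast
      ring
  | zero => exact ⟨0, by simp⟩
  | add x y hx hy ihx ihy =>
      obtain ⟨m1, h1⟩ := ihx
      obtain ⟨m2, h2⟩ := ihy
      exact ⟨m1 + m2, by rw [coord_add, coord_add]; push_cast; linarith⟩
  | neg x hx ihx =>
      obtain ⟨m1, h1⟩ := ihx
      refine ⟨-m1, ?_⟩
      have : ((-x : H0 n) : Amb n) i - ((-x : H0 n) : Amb n) j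
          = -((x : Amb n) i - (x : Amb n) j) := by
        show -(x : Amb n) i - -(x : Amb n) j = _
        ring
      rw [this, h1]
      push_cast
      ring

end Stmt13

open Stmt13 in

/-- If `F` is a nonempty face of the permutohedral tiling with
`s(F) = F`, where `s` is the affine reflection above, then `s` maps each tile containing
`F` to itself. -/
theorem statement13 (n : ℕ) (hn : 1 ≤ n) (i j : Fin (n + 1)) (hij : i ≠ j) (k : ℤ)
    (F : Set (H0 n)) (hFne : F.Nonempty) (hF : ∃ μ ∈ latL n, IsFace (tile n μ) F)
    (hsF : reflIJ n i j k '' F = F) :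
    ∀ μ ∈ latL n, F ⊆ tile n μ → reflIJ n i j k '' tile n μ = tile n μ := by
  intro μ hμ hFμ
  obtain ⟨μ', hμ', ℓ, hFeq⟩ := hF
  have htileconv : ∀ ν : H0 n, Convex ℝ (tile n ν) := fun ν =>
    (convex_convexHull ℝ _).translate ν
  have hFconv : Convex ℝ F := by
    rw [hFeq]
    have heq : {x ∈ tile n μ' | ∀ y ∈ tile n μ', ℓ y ≤ ℓ x}
        = tile n μ' ∩ ⋂ y ∈ tile n μ', {x | ℓ y ≤ ℓ x} := by
      ext x
      simp [Set.mem_iInter]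
    rw [heq]
    exact (htileconv μ').inter (convex_iInter fun y => convex_iInter fun _ =>
      convex_halfSpace_ge (LinearMap.isLinear ℓ) _)
  obtain ⟨q, hq⟩ := hFne
  have hsq : reflIJ n i j k q ∈ F := by
    rw [← hsF]
    exact ⟨q, hq, rfl⟩
  set p : H0 n := (1/2 : ℝ) • q + (1/2 : ℝ) • reflIJ n i j k q with hp
  have hpF : p ∈ F := hFconv hq hsq (by norm_num) (by norm_num) (by norm_num)
  have hpk : (p : Amb n) i - (p : Amb n) j = k := by
    rw [hp]
    rw [Stmt13.coord_add, Stmt13.coord_add, Stmt13.coord_smul, Stmt13.coord_smul,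
      Stmt13.coord_smul, Stmt13.coord_smul, Stmt13.reflIJ_i hij, Stmt13.reflIJ_j hij]
    ring
  obtain ⟨y, hy, hpy⟩ := hFμ hpF
  obtain ⟨m, hm⟩ := Stmt13.lat_int i j hμ
  have hyij : (y : Amb n) i - (y : Amb n) j = k - m := by
    have h1 : ((μ + y : H0 n) : Amb n) i - ((μ + y : H0 n) : Amb n) j = k := by
      have hpy' : μ + y = p := hpy
      rw [hpy']; exact hpk
    rw [Stmt13.coord_add, Stmt13.coord_add] at h1
    linarith [hm]
  have hbound := Stmt13.abs_sub_le_of_mem_Perm i j hy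
  rw [hyij] at hbound
  have hlt1 : (n : ℝ) / (n + 1) < 1 := by
    rw [div_lt_one (by positivity)]
    linarith
  have hkm : k = m := by
    have h1 : |((k - m : ℤ) : ℝ)| < 1 := by
      push_cast
      exact lt_of_le_of_lt hbound hlt1
    have h2 : |(k - m : ℤ)| < 1 := by exact_mod_cast h1
    have h3 : (k - m : ℤ) = 0 := by rwa [Int.abs_lt_one_iff] at h2
    omega
  have hμij : (μ : Amb n) i - (μ : Amb n) j = k := by
    rw [hm, hkm]
  have hsub : ∀ x ∈ tile n μ, reflIJ n i j k x ∈ tile n μ := by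
    rintro x ⟨y', hy', rfl⟩
    refine ⟨permAct n (Equiv.swap i j) y', Stmt13.permAct_mem_Perm _ hy', ?_⟩
    rw [← Stmt13.reflIJ_zero hij y']
    apply Stmt13.H0_ext
    intro a
    rw [Stmt13.coord_add, Stmt13.reflIJ_coord, Stmt13.reflIJ_coord,
      Stmt13.coord_add, Stmt13.coord_add, Stmt13.coord_add]
    have hE := hμij
    push_cast
    linear_combination ((if a = i then (1:ℝ) else 0) - (if a = j then 1 else 0)) * hE
  ext x
  constructor
  · rintro ⟨z, hz, rfl⟩
    exact hsub z hz
  · intro hx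
    exact ⟨reflIJ n i j k x, hsub x hx, Stmt13.reflIJ_invol hij k x⟩


end
end
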